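/- For the Lie algebra g₄₃₃ with ad_T = ((1,1,0),(0,1,1),(0,0,1)) on span(X,Y,Z) (brackets [T,X]=X, [T,Y]=X+Y, [T,Z]=Y+Z), fix α,β,γ ∈ ℝ and define Ã_A(p,q) = dp + (aα + bqα + bβ + (1/2)cαq² + cβq + cγ)e^q for A = aX+bY+cZ+dT. Then {Ã_A, Ã_B} = Ã_{[A,B]} for the standard Poisson bracket on ℝ². -/

import Mathlib

/-- The Hamiltonian function on the generic orbit of `g₄₃₃`, for
`A = aX+bY+cZ+dT`:
`Ã_A(p,q) = dp + (aα + bqα + bβ + (1/2)cαq² + cβq + cγ)e^q`. -/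
noncomputable def Atil433 (α β γ : ℝ) (a b c d : ℝ) : ℝ → ℝ → ℝ := fun p q =>
  d * p + (a * α + b * q * α + b * β + (1 / 2) * c * α * q ^ 2
    + c * β * q + c * γ) * Real.exp q

lemma derivP433 (α β γ a b c d q p : ℝ) :
    deriv (fun p' => Atil433 α β γ a b c d p' q) p = d := by
  have h : HasDerivAt (fun p' => Atil433 α β γ a b c d p' q) d p := by
    have := ((hasDerivAt_id p).const_mul d).add_const
      ((a * α + b * q * α + b * β + (1 / 2) * c * α * q ^ 2
        + c * β * q + c * γ) * Real.exp q)
    simpa [Atil433] using this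
  exact h.deriv

lemma derivQ433 (α β γ a b c d p q : ℝ) :
    deriv (fun q' => Atil433 α β γ a b c d p q') q
      = (b * α + c * α * q + c * β) * Real.exp q
        + (a * α + b * q * α + b * β + (1 / 2) * c * α * q ^ 2
          + c * β * q + c * γ) * Real.exp q := by
  have h1 : HasDerivAt (fun q' : ℝ => a * α + b * q' * α + b * β
      + (1 / 2) * c * α * q' ^ 2 + c * β * q' + c * γ)
      (b * α + c * α * q + c * β) q := by
    have h2 := (((((hasDerivAt_const q (a * α)).add
        (((hasDerivAt_id q).const_mul b).mul_const α)).add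
        (hasDerivAt_const q (b * β))).add
        ((hasDerivAt_pow 2 q).const_mul ((1/2) * c * α))).add
        ((hasDerivAt_id q).const_mul (c * β))).add (hasDerivAt_const q (c * γ))
    convert h2 using 1
    · rfl
    · rfl
    · rfl
    simp; ring
  have h : HasDerivAt (fun q' => Atil433 α β γ a b c d p q')
      ((b * α + c * α * q + c * β) * Real.exp q
        + (a * α + b * q * α + b * β + (1 / 2) * c * α * q ^ 2
          + c * β * q + c * γ) * Real.exp q) q := by
    have h3 := (hasDerivAt_const q (d * p)).add (h1.mul (Real.hasDerivAt_exp q))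
    convert h3 using 1
    · rfl
    · rfl
    · rfl
    simp
  exact h.deriv

/-- For `g₄₃₃` (brackets `[T,X]=X, [T,Y]=X+Y, [T,Z]=Y+Z`, so
`[A,B] = ((da'−d'a)+(db'−d'b))X + ((db'−d'b)+(dc'−d'c))Y + (dc'−d'c)Z`),
`{Ã_A, Ã_B} = Ã_{[A,B]}` for the standard Poisson bracket on ℝ². -/
theorem stmt_15 (α β γ : ℝ) (a b c d a' b' c' d' : ℝ) (p q : ℝ) :
    deriv (fun p' => Atil433 α β γ a b c d p' q) p *
        deriv (fun q' => Atil433 α β γ a' b' c' d' p q') q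
      - deriv (fun q' => Atil433 α β γ a b c d p q') q *
        deriv (fun p' => Atil433 α β γ a' b' c' d' p' q) p
      = Atil433 α β γ ((d * a' - d' * a) + (d * b' - d' * b))
          ((d * b' - d' * b) + (d * c' - d' * c)) (d * c' - d' * c) 0 p q := by
  rw [derivP433, derivP433, derivQ433, derivQ433]
  simp only [Atil433]
  ring
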